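/- If γ₀ ∈ (0,1), ρ > 0, and the sequence (γₙ) is defined by γ_{n+1} = γₙ / √(1 + 2ρ γₙ (1 - γₙ)), then n·ρ·γₙ → 1 as n → ∞; in particular γₙ behaves asymptotically like 1/(ρn). -/
import Mathlib

open Filter Real

set_option maxHeartbeats 1000000 in
theorem gamma_seq_n_rho_gamma_tendsto_one
    (ρ : ℝ) (hρ : 0 < ρ) (γ : ℕ → ℝ) (hγ0 : γ 0 ∈ Set.Ioo (0 : ℝ) 1)
    (hrec : ∀ n, γ (n + 1) = γ n / Real.sqrt (1 + 2 * ρ * γ n * (1 - γ n))) :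
    Filter.Tendsto (fun n : ℕ => (n : ℝ) * ρ * γ n) Filter.atTop (nhds 1) := by
  -- basic bounds
  have key : ∀ n, 0 < γ n ∧ γ n < 1 := by
    intro n
    induction n with
    | zero => exact ⟨hγ0.1, hγ0.2⟩
    | succ n ih =>
      obtain ⟨h0, h1⟩ := ih
      have hx : 0 < 2 * ρ * γ n * (1 - γ n) :=
        mul_pos (mul_pos (by linarith) h0) (by linarith)
      have hd : 1 < Real.sqrt (1 + 2 * ρ * γ n * (1 - γ n)) := by
        rw [Real.lt_sqrt (by norm_num)]; nlinarith
      have hd0 : (0:ℝ) < Real.sqrt (1 + 2 * ρ * γ n * (1 - γ n)) := by linarith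
      rw [hrec n]
      refine ⟨by positivity, ?_⟩
      calc γ n / Real.sqrt (1 + 2 * ρ * γ n * (1 - γ n)) < γ n / 1 :=
            div_lt_div_of_pos_left h0 one_pos hd
        _ = γ n := by ring
        _ < 1 := h1
  have hpos : ∀ n, 0 < γ n := fun n => (key n).1
  have hlt1 : ∀ n, γ n < 1 := fun n => (key n).2
  have hxpos : ∀ n, 0 < 2 * ρ * γ n * (1 - γ n) := fun n =>
    mul_pos (mul_pos (by linarith) (hpos n)) (by linarith [hlt1 n])
  have harg : ∀ n, (0:ℝ) < 1 + 2 * ρ * γ n * (1 - γ n) := fun n => by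
    linarith [hxpos n]
  -- strictly decreasing
  have hanti : Antitone γ := by
    apply antitone_nat_of_succ_le
    intro n
    have hd : 1 ≤ Real.sqrt (1 + 2 * ρ * γ n * (1 - γ n)) := by
      rw [Real.le_sqrt (by norm_num) (harg n).le]; nlinarith [hxpos n]
    rw [hrec n]
    calc γ n / Real.sqrt (1 + 2 * ρ * γ n * (1 - γ n)) ≤ γ n / 1 :=
          div_le_div_of_nonneg_left (hpos n).le one_pos hd
      _ = γ n := by ring
  -- convergence to infimum L
  have hbdd : BddBelow (Set.range γ) := ⟨0, by rintro x ⟨n, rfl⟩; exact (hpos n).le⟩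
  set L := ⨅ n, γ n with hLdef
  have hγL : Tendsto γ atTop (nhds L) := tendsto_atTop_ciInf hanti hbdd
  have hL0 : 0 ≤ L := le_ciInf (fun n => (hpos n).le)
  have hL1 : L < 1 := lt_of_le_of_lt (ciInf_le hbdd 0) hγ0.2
  -- L = 0
  have hLzero : L = 0 := by
    by_contra hne
    have hLpos : 0 < L := lt_of_le_of_ne hL0 (Ne.symm hne)
    have h1 : Tendsto (fun n => γ (n + 1)) atTop (nhds L) :=
      hγL.comp (tendsto_add_atTop_nat 1)
    have hden : Tendsto (fun n => Real.sqrt (1 + 2 * ρ * γ n * (1 - γ n)))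
        atTop (nhds (Real.sqrt (1 + 2 * ρ * L * (1 - L)))) := by
      apply Filter.Tendsto.sqrt
      exact Tendsto.add tendsto_const_nhds
        (((tendsto_const_nhds.mul hγL)).mul (tendsto_const_nhds.sub hγL))
    have hLprod : 0 < ρ * L * (1 - L) :=
      mul_pos (mul_pos hρ hLpos) (by linarith)
    have hdpos : 0 < Real.sqrt (1 + 2 * ρ * L * (1 - L)) := by
      apply Real.sqrt_pos.2; nlinarith
    have h2 : Tendsto (fun n => γ (n + 1)) atTop
        (nhds (L / Real.sqrt (1 + 2 * ρ * L * (1 - L)))) := by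
      simp_rw [hrec]
      exact hγL.div hden hdpos.ne'
    have heq : L = L / Real.sqrt (1 + 2 * ρ * L * (1 - L)) :=
      tendsto_nhds_unique h1 h2
    rw [eq_div_iff hdpos.ne'] at heq
    have hs1 : Real.sqrt (1 + 2 * ρ * L * (1 - L)) = 1 :=
      mul_left_cancel₀ hne (heq.trans (mul_one L).symm)
    have hsq := Real.sq_sqrt (by nlinarith : (0:ℝ) ≤ 1 + 2 * ρ * L * (1 - L))
    rw [hs1] at hsq
    nlinarith
  rw [hLzero] at hγL
  -- differences of a n = 1/γ n
  set a : ℕ → ℝ := fun n => 1 / γ n with ha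
  have hdiff : ∀ n, a (n + 1) - a n
      = 2 * ρ * (1 - γ n) / (Real.sqrt (1 + 2 * ρ * γ n * (1 - γ n)) + 1) := by
    intro n
    have hs := Real.sq_sqrt (harg n).le
    set s := Real.sqrt (1 + 2 * ρ * γ n * (1 - γ n)) with hsd
    have hspos : 0 < s := Real.sqrt_pos.2 (harg n)
    have hγn := hpos n
    simp only [ha, hrec n]
    rw [div_div_eq_mul_div, one_mul]
    field_simp
    nlinarith [hs]
  -- u n := a(n+1) - a n tends to ρ
  have hu : Tendsto (fun n => a (n + 1) - a n) atTop (nhds ρ) := by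
    have h1 : Tendsto (fun n => 1 + 2 * ρ * γ n * (1 - γ n)) atTop (nhds 1) := by
      have h := Filter.Tendsto.add (tendsto_const_nhds (x := (1:ℝ)))
        (Filter.Tendsto.mul
          (Filter.Tendsto.mul (tendsto_const_nhds (x := 2*ρ)) hγL)
          (Filter.Tendsto.sub (tendsto_const_nhds (x := (1:ℝ))) hγL))
      simpa using h
    have hden : Tendsto (fun n => Real.sqrt (1 + 2 * ρ * γ n * (1 - γ n)) + 1)
        atTop (nhds 2) := by
      have h2 := h1.sqrt.add (tendsto_const_nhds (x := (1:ℝ)))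
      norm_num at h2
      exact h2
    have hnum : Tendsto (fun n => 2 * ρ * (1 - γ n)) atTop (nhds (2 * ρ)) := by
      have := Filter.Tendsto.mul (tendsto_const_nhds (x := 2*ρ))
        (Filter.Tendsto.sub (tendsto_const_nhds (x := (1:ℝ))) hγL)
      simpa using this
    have hdv := hnum.div hden (by norm_num)
    have hρ2 : 2 * ρ / 2 = ρ := by ring
    rw [hρ2] at hdv
    simp_rw [hdiff]
    exact hdv
  -- Cesàro => a n / n → ρ
  have hcesaro := hu.cesaro
  have htel : ∀ n, ∑ i ∈ Finset.range n, (a (i + 1) - a i) = a n - a 0 :=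
    fun n => Finset.sum_range_sub a n
  simp_rw [htel] at hcesaro
  have han : Tendsto (fun n : ℕ => (n : ℝ)⁻¹ * a n) atTop (nhds ρ) := by
    have h0 : Tendsto (fun n : ℕ => (n : ℝ)⁻¹ * a 0) atTop (nhds 0) := by
      have := tendsto_inv_atTop_zero.comp (tendsto_natCast_atTop_atTop (R := ℝ))
      simpa using this.mul_const (a 0)
    have h := hcesaro.add h0
    norm_num at h
    simp only [mul_sub] at h
    simpa using h
  -- conclude
  have hinv : Tendsto (fun n : ℕ => ((n : ℝ)⁻¹ * a n)⁻¹) atTop (nhds ρ⁻¹) :=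
    han.inv₀ hρ.ne'
  have heq2 : ∀ n : ℕ, ((n : ℝ)⁻¹ * a n)⁻¹ = (n : ℝ) * γ n := by
    intro n
    simp only [ha, mul_inv, inv_inv, one_div]
  simp_rw [heq2] at hinv
  have hfin := hinv.const_mul ρ
  rw [mul_inv_cancel₀ hρ.ne'] at hfin
  have heq3 : ∀ n : ℕ, ρ * ((n:ℝ) * γ n) = (n : ℝ) * ρ * γ n := fun n => by ring
  simp_rw [heq3] at hfin
  exact hfin
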